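/- Let V be a 4-dimensional vector space over a field K and B a nondegenerate alternating bilinear form on V. Then there do not exist three 2-dimensional totally isotropic subspaces L₁, L₂, L₃ of V such that the pairwise intersections L₁ ∩ L₂, L₁ ∩ L₃, L₂ ∩ L₃ are all nonzero and pairwise distinct. Equivalently, if L₁, L₂, L₃ are 2-dimensional totally isotropic subspaces whose pairwise intersections are all nonzero, then at least two of the subspaces L₁ ∩ L₂, L₁ ∩ L₃, L₂ ∩ L₃ coincide. -/

import Mathlib

/-!
Suppose the three lines `ℓᵢⱼ = Lᵢ ⊓ Lⱼ` are pairwise distinct. Two distinct lines in a plane span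
it, so `L₁ = ℓ₁₂ ⊔ ℓ₁₃` and `L₂ = ℓ₁₂ ⊔ ℓ₂₃`. The line `ℓ₂₃` is orthogonal to `ℓ₁₂` (both lie in the
isotropic plane `L₂`) and to `ℓ₁₃` (both lie in `L₃`), hence to `L₁`. In dimension `4` an isotropic
plane is its own orthogonal, so `ℓ₂₃ ≤ L₁`, whence `L₂ ≤ L₁`, `L₁ = L₂` and `ℓ₁₃ = ℓ₂₃`.
-/

open Module LinearMap.BilinForm

section

variable {K V : Type*} [Field K] [AddCommGroup V] [Module K V]

theorem Submodule.eq_or_sup_eq_of_finrank_eq_two [FiniteDimensional K V] {P A C : Submodule K V}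
    (hP : finrank K P = 2) (hA : A ≤ P) (hC : C ≤ P) (hA₀ : A ≠ ⊥) (hC₀ : C ≠ ⊥) :
    A = C ∨ A ⊔ C = P := by
  refine or_iff_not_imp_right.mpr fun hsup => ?_
  have hlt : finrank K ↥(A ⊔ C) < 2 :=
    hP ▸ Submodule.finrank_lt_finrank_of_lt (lt_of_le_of_ne (sup_le hA hC) hsup)
  have hA₁ := Submodule.one_le_finrank_iff.mpr hA₀
  have hC₁ := Submodule.one_le_finrank_iff.mpr hC₀
  calc A = A ⊔ C := Submodule.eq_of_le_of_finrank_le le_sup_left (by omega)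
    _ = C := (Submodule.eq_of_le_of_finrank_le le_sup_right (by omega)).symm

namespace LinearMap.BilinForm

theorem inf_le_orthogonal_sup {B : LinearMap.BilinForm K V} {L₂ L₃ A C : Submodule K V}
    (hL₂ : L₂ ≤ B.orthogonal L₂) (hL₃ : L₃ ≤ B.orthogonal L₃) (hA : A ≤ L₂) (hC : C ≤ L₃) :
    L₂ ⊓ L₃ ≤ B.orthogonal (A ⊔ C) := by
  intro x ⟨hx₂, hx₃⟩ n hn
  obtain ⟨a, ha, c, hc, rfl⟩ := Submodule.mem_sup.mp hn
  simp only [map_add, LinearMap.add_apply, hL₂ hx₂ a (hA ha), hL₃ hx₃ c (hC hc), add_zero]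

theorem orthogonal_eq_self_of_le_orthogonal [FiniteDimensional K V]
    {B : LinearMap.BilinForm K V} (hB : B.Nondegenerate) {L : Submodule K V}
    (hL : L ≤ B.orthogonal L) (hdim : 2 * finrank K L = finrank K V) :
    B.orthogonal L = L :=
  (Submodule.eq_of_le_of_finrank_le hL (by rw [finrank_orthogonal hB]; omega)).symm

end LinearMap.BilinForm

end

theorem no_three_isotropic_planes_with_distinct_intersection_lines_general
    {K V : Type*} [Field K] [AddCommGroup V] [Module K V] [FiniteDimensional K V]
    (hdim : Module.finrank K V = 4)
    (B : V →ₗ[K] V →ₗ[K] K)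
    (halt : ∀ x : V, B x x = 0)
    (hnd : ∀ x : V, (∀ y : V, B x y = 0) → x = 0)
    (L₁ L₂ L₃ : Submodule K V)
    (hL₁dim : Module.finrank K L₁ = 2)
    (hL₂dim : Module.finrank K L₂ = 2)
    (hL₁ : ∀ x ∈ L₁, ∀ y ∈ L₁, B x y = 0)
    (hL₂ : ∀ x ∈ L₂, ∀ y ∈ L₂, B x y = 0)
    (hL₃ : ∀ x ∈ L₃, ∀ y ∈ L₃, B x y = 0)
    (h₁₂ : L₁ ⊓ L₂ ≠ ⊥) (h₁₃ : L₁ ⊓ L₃ ≠ ⊥) (h₂₃ : L₂ ⊓ L₃ ≠ ⊥) :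
    L₁ ⊓ L₂ = L₁ ⊓ L₃ ∨ L₁ ⊓ L₂ = L₂ ⊓ L₃ ∨ L₁ ⊓ L₃ = L₂ ⊓ L₃ := by
  have hB : B.Nondegenerate :=
    (LinearMap.IsAlt.isRefl halt).nondegenerate_iff_separatingLeft.mpr hnd
  have hL₁orth : orthogonal B L₁ = L₁ :=
    orthogonal_eq_self_of_le_orthogonal hB (fun y hy x hx => hL₁ x hx y hy) (by omega)
  rcases Submodule.eq_or_sup_eq_of_finrank_eq_two hL₁dim inf_le_left inf_le_left h₁₂ h₁₃
    with h | hsup₁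
  · exact .inl h
  rcases Submodule.eq_or_sup_eq_of_finrank_eq_two hL₂dim inf_le_right inf_le_left h₁₂ h₂₃
    with h | hsup₂
  · exact .inr (.inl h)
  have hℓ₂₃ : L₂ ⊓ L₃ ≤ L₁ := by
    rw [← hL₁orth, ← hsup₁]
    exact inf_le_orthogonal_sup (fun y hy x hx => hL₂ x hx y hy)
      (fun y hy x hx => hL₃ x hx y hy) inf_le_right inf_le_right
  have hL₁₂ : L₂ = L₁ :=
    Submodule.eq_of_le_of_finrank_eq (hsup₂ ▸ sup_le inf_le_left hℓ₂₃) (by omega)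
  exact .inr (.inr (by rw [hL₁₂]))

/-- Let `V` be a `4`-dimensional vector space with a nondegenerate alternating
bilinear form `B`. There do not exist three `2`-dimensional totally isotropic
subspaces `L₁`, `L₂`, `L₃` of `V` whose pairwise intersections are all nonzero and
pairwise distinct: if the pairwise intersections are all nonzero, then at least two
of `L₁ ⊓ L₂`, `L₁ ⊓ L₃`, `L₂ ⊓ L₃` coincide. -/
theorem no_three_isotropic_planes_with_distinct_intersection_lines
    {K V : Type*} [Field K] [AddCommGroup V] [Module K V] [FiniteDimensional K V]
    (hdim : Module.finrank K V = 4)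
    (B : V →ₗ[K] V →ₗ[K] K)
    (halt : ∀ x : V, B x x = 0)
    (hnd : ∀ x : V, (∀ y : V, B x y = 0) → x = 0)
    (L₁ L₂ L₃ : Submodule K V)
    (hL₁dim : Module.finrank K L₁ = 2)
    (hL₂dim : Module.finrank K L₂ = 2)
    (hL₃dim : Module.finrank K L₃ = 2)
    (hL₁ : ∀ x ∈ L₁, ∀ y ∈ L₁, B x y = 0)
    (hL₂ : ∀ x ∈ L₂, ∀ y ∈ L₂, B x y = 0)
    (hL₃ : ∀ x ∈ L₃, ∀ y ∈ L₃, B x y = 0)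
    (h₁₂ : L₁ ⊓ L₂ ≠ ⊥) (h₁₃ : L₁ ⊓ L₃ ≠ ⊥) (h₂₃ : L₂ ⊓ L₃ ≠ ⊥) :
    L₁ ⊓ L₂ = L₁ ⊓ L₃ ∨ L₁ ⊓ L₂ = L₂ ⊓ L₃ ∨ L₁ ⊓ L₃ = L₂ ⊓ L₃ :=
  no_three_isotropic_planes_with_distinct_intersection_lines_general hdim B halt hnd L₁ L₂ L₃ hL₁dim
    hL₂dim hL₁ hL₂ hL₃ h₁₂ h₁₃ h₂₃
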